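/- arXiv:2605.05147 — 2 statements merged into one kernel-verified Lean document; each statement's English description precedes it below -/
import Mathlib

section
/- Let H be a real Hilbert space and f: H → ℝ ∪ {+∞} proper, lsc, convex with dom f = dom ∂f. Then f is strictly convex if and only if ∂f is strictly monotone. -/
open scoped InnerProductSpace

variable {H : Type*} [NormedAddCommGroup H] [InnerProductSpace ℝ H] [CompleteSpace H]

/-- `f` is proper: not identically `⊤` and never `⊥`. -/
def IsProperFn (f : H → EReal) : Prop := (∃ x, f x ≠ ⊤) ∧ ∀ x, f x ≠ ⊥

/-- `f` is convex (as an extended-real-valued function). -/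
def IsConvexFn (f : H → EReal) : Prop :=
  ∀ x y : H, ∀ t : ℝ, 0 < t → t < 1 →
    f ((1 - t) • x + t • y) ≤ ((1 - t : ℝ) : EReal) * f x + ((t : ℝ) : EReal) * f y

/-- `f` is strictly convex on the set `s`. -/
def StrictConvexOnSet (f : H → EReal) (s : Set H) : Prop :=
  ∀ x ∈ s, ∀ y ∈ s, x ≠ y → ∀ t : ℝ, 0 < t → t < 1 →
    f ((1 - t) • x + t • y) < ((1 - t : ℝ) : EReal) * f x + ((t : ℝ) : EReal) * f y

/-- The effective domain of `f`. -/
def domFn (f : H → EReal) : Set H := {x | f x ≠ ⊤}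

/-- `f` is strictly convex (on its domain). -/
def IsStrictConvexFn (f : H → EReal) : Prop := StrictConvexOnSet f (domFn f)

/-- The convex subdifferential of `f` at `x`. -/
def subdiff (f : H → EReal) (x : H) : Set H :=
  {v | ∀ y : H, f x + ((⟪v, y - x⟫_ℝ : ℝ) : EReal) ≤ f y}

/-- The domain of the subdifferential. -/
def domSubdiff (f : H → EReal) : Set H := {x | (subdiff f x).Nonempty}

/-- `f` is almost strictly convex: strictly convex along every line segment in `dom ∂f`. -/
def AlmostStrictlyConvex (f : H → EReal) : Prop :=
  ∀ x₀ x₁ : H, x₀ ≠ x₁ → segment ℝ x₀ x₁ ⊆ domSubdiff f →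
    StrictConvexOnSet f (segment ℝ x₀ x₁)

/-- `∂f` is strictly monotone. -/
def StrictlyMonotoneSubdiff (f : H → EReal) : Prop :=
  ∀ x₀ x₁ v₀ v₁ : H, v₀ ∈ subdiff f x₀ → v₁ ∈ subdiff f x₁ → x₀ ≠ x₁ →
    0 < ⟪v₀ - v₁, x₀ - x₁⟫_ℝ

/-!
If `f` lies strictly below a chord at some point, averaging there the subgradient inequalities of
`v₀ ∈ ∂f x₀` and `v₁ ∈ ∂f x₁` forces `⟪v₀ - v₁, x₀ - x₁⟫ > 0`. Conversely, if `f` meets the chord of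
`[x, y]` at an interior point, a subgradient there has slope `f y - f x` along `y - x`, so its affine
minorant is the chord's line and the convex `f` coincides with the chord on the whole segment. Two
distinct points of the segment then carry subgradients (as `dom f ⊆ dom ∂f`) with the same slope
along `y - x`, contradicting strict monotonicity.
-/

namespace IsProperFn

lemma coe_toReal {α : Type*} {f : α → EReal} (hp : IsProperFn f) {x : α} (hx : f x ≠ ⊤) :
    ((f x).toReal : EReal) = f x :=
  EReal.coe_toReal hx (hp.2 x)

lemma coe_chord {α : Type*} {f : α → EReal} (hp : IsProperFn f) {x y : α} (hx : f x ≠ ⊤)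
    (hy : f y ≠ ⊤) (t : ℝ) :
    ((1 - t : ℝ) : EReal) * f x + ((t : ℝ) : EReal) * f y =
      (((1 - t) * (f x).toReal + t * (f y).toReal : ℝ) : EReal) := by
  rw [← hp.coe_toReal hx, ← hp.coe_toReal hy]
  norm_cast

end IsProperFn

section

variable {E : Type*} [NormedAddCommGroup E] [InnerProductSpace ℝ E] {f : E → EReal}

namespace IsProperFn

lemma ne_top_of_mem_subdiff (hp : IsProperFn f) {x v : E} (hv : v ∈ subdiff f x) : f x ≠ ⊤ := by
  obtain ⟨y, hy⟩ := hp.1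
  intro hx
  have := hv y
  rw [hx, EReal.top_add_coe, top_le_iff] at this
  exact hy this

lemma toReal_add_inner_le (hp : IsProperFn f) {x y v : E} (hv : v ∈ subdiff f x)
    (hy : f y ≠ ⊤) : (f x).toReal + ⟪v, y - x⟫_ℝ ≤ (f y).toReal := by
  have h := hv y
  rw [← hp.coe_toReal (hp.ne_top_of_mem_subdiff hv), ← hp.coe_toReal hy] at h
  exact_mod_cast h

lemma le_chord (hp : IsProperFn f) (hc : IsConvexFn f) {x y : E} (hx : f x ≠ ⊤) (hy : f y ≠ ⊤)
    {t : ℝ} (ht₀ : 0 < t) (ht₁ : t < 1) :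
    f ((1 - t) • x + t • y) ≤ (((1 - t) * (f x).toReal + t * (f y).toReal : ℝ) : EReal) :=
  (hc x y t ht₀ ht₁).trans_eq (hp.coe_chord hx hy t)

lemma ne_top_of_le_chord (hp : IsProperFn f) (hc : IsConvexFn f) {x y : E} (hx : f x ≠ ⊤)
    (hy : f y ≠ ⊤) {t : ℝ} (ht₀ : 0 < t) (ht₁ : t < 1) : f ((1 - t) • x + t • y) ≠ ⊤ :=
  ne_top_of_le_ne_top (EReal.coe_ne_top _) (hp.le_chord hc hx hy ht₀ ht₁)

lemma inner_sub_pos_of_lt_chord (hp : IsProperFn f) {x₀ x₁ v₀ v₁ : E}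
    (hv₀ : v₀ ∈ subdiff f x₀) (hv₁ : v₁ ∈ subdiff f x₁) {t : ℝ} (ht₀ : 0 < t) (ht₁ : t < 1)
    (hlt : f ((1 - t) • x₀ + t • x₁) < ((1 - t : ℝ) : EReal) * f x₀ + ((t : ℝ) : EReal) * f x₁) :
    0 < ⟪v₀ - v₁, x₀ - x₁⟫_ℝ := by
  set z := (1 - t) • x₀ + t • x₁
  rw [hp.coe_chord (hp.ne_top_of_mem_subdiff hv₀) (hp.ne_top_of_mem_subdiff hv₁)] at hlt
  have hz : f z ≠ ⊤ := ne_top_of_lt hlt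
  rw [← hp.coe_toReal hz, EReal.coe_lt_coe_iff] at hlt
  have h₀ := hp.toReal_add_inner_le hv₀ hz
  have h₁ := hp.toReal_add_inner_le hv₁ hz
  rw [show z - x₀ = (-t) • (x₀ - x₁) by module, inner_smul_right] at h₀
  rw [show z - x₁ = (1 - t) • (x₀ - x₁) by module, inner_smul_right] at h₁
  rw [inner_sub_left]
  nlinarith [mul_pos ht₀ (sub_pos.2 ht₁)]

lemma inner_sub_eq_of_toReal_eq_chord (hp : IsProperFn f) {x y v : E} (hx : f x ≠ ⊤)
    (hy : f y ≠ ⊤) {t : ℝ} (ht₀ : 0 < t) (ht₁ : t < 1) (hv : v ∈ subdiff f ((1 - t) • x + t • y))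
    (heq : (f ((1 - t) • x + t • y)).toReal = (1 - t) * (f x).toReal + t * (f y).toReal) :
    ⟪v, y - x⟫_ℝ = (f y).toReal - (f x).toReal := by
  have hx' := hp.toReal_add_inner_le hv hx
  have hy' := hp.toReal_add_inner_le hv hy
  rw [show x - ((1 - t) • x + t • y) = (-t) • (y - x) by module, inner_smul_right] at hx'
  rw [show y - ((1 - t) • x + t • y) = (1 - t) • (y - x) by module, inner_smul_right] at hy'
  apply le_antisymm
  · nlinarith
  · nlinarith

lemma toReal_eq_chord_of_toReal_eq_chord (hp : IsProperFn f) (hc : IsConvexFn f) {x y v : E}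
    (hx : f x ≠ ⊤) (hy : f y ≠ ⊤) {t : ℝ} (ht₀ : 0 < t) (ht₁ : t < 1)
    (hv : v ∈ subdiff f ((1 - t) • x + t • y))
    (heq : (f ((1 - t) • x + t • y)).toReal = (1 - t) * (f x).toReal + t * (f y).toReal)
    {s : ℝ} (hs₀ : 0 < s) (hs₁ : s < 1) :
    (f ((1 - s) • x + s • y)).toReal = (1 - s) * (f x).toReal + s * (f y).toReal := by
  have hzs := hp.ne_top_of_le_chord hc hx hy hs₀ hs₁
  apply le_antisymm
  · exact_mod_cast (hp.coe_toReal hzs).trans_le (hp.le_chord hc hx hy hs₀ hs₁)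
  · have hslope := hp.inner_sub_eq_of_toReal_eq_chord hx hy ht₀ ht₁ hv heq
    have h := hp.toReal_add_inner_le hv hzs
    rw [show (1 - s) • x + s • y - ((1 - t) • x + t • y) = (s - t) • (y - x) by module,
      inner_smul_right, hslope, heq] at h
    linarith

end IsProperFn

lemma strictlyMonotoneSubdiff_of_isStrictConvexFn (hp : IsProperFn f)
    (hsc : IsStrictConvexFn f) : StrictlyMonotoneSubdiff f := by
  intro x₀ x₁ v₀ v₁ hv₀ hv₁ hne
  exact hp.inner_sub_pos_of_lt_chord hv₀ hv₁ one_half_pos one_half_lt_one <|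
    hsc x₀ (hp.ne_top_of_mem_subdiff hv₀) x₁ (hp.ne_top_of_mem_subdiff hv₁) hne _
      one_half_pos one_half_lt_one

lemma isStrictConvexFn_of_strictlyMonotoneSubdiff (hp : IsProperFn f) (hc : IsConvexFn f)
    (hdom : domFn f ⊆ domSubdiff f) (hm : StrictlyMonotoneSubdiff f) : IsStrictConvexFn f := by
  intro x hx y hy hxy t ht₀ ht₁
  by_contra hnot
  have hzt := hp.ne_top_of_le_chord hc hx hy ht₀ ht₁
  have heq : (f ((1 - t) • x + t • y)).toReal = (1 - t) * (f x).toReal + t * (f y).toReal := by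
    rw [hp.coe_chord hx hy, ← hp.coe_toReal hzt, EReal.coe_lt_coe_iff, not_lt] at hnot
    exact le_antisymm (EReal.coe_le_coe_iff.1 <|
      (hp.coe_toReal hzt).trans_le (hp.le_chord hc hx hy ht₀ ht₁)) hnot
  have hs₀ : 0 < t / 2 := half_pos ht₀
  have hs₁ : t / 2 < 1 := by linarith
  obtain ⟨v, hv⟩ := hdom hzt
  obtain ⟨w, hw⟩ := hdom (hp.ne_top_of_le_chord hc hx hy hs₀ hs₁)
  have hslope_v := hp.inner_sub_eq_of_toReal_eq_chord hx hy ht₀ ht₁ hv heq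
  have hslope_w := hp.inner_sub_eq_of_toReal_eq_chord hx hy hs₀ hs₁ hw
    (hp.toReal_eq_chord_of_toReal_eq_chord hc hx hy ht₀ ht₁ hv heq hs₀ hs₁)
  have hne : (1 - t) • x + t • y ≠ (1 - t / 2) • x + (t / 2) • y := by
    intro h
    have : (t / 2) • (y - x) = 0 := by rw [← sub_eq_zero.2 h]; module
    exact hxy (sub_eq_zero.1 ((smul_eq_zero.1 this).resolve_left hs₀.ne')).symm
  have hpos := hm _ _ _ _ hv hw hne
  rw [show (1 - t) • x + t • y - ((1 - t / 2) • x + (t / 2) • y) = (t / 2) • (y - x) by module,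
    inner_smul_right, inner_sub_left, hslope_v, hslope_w, sub_self, mul_zero] at hpos
  exact lt_irrefl 0 hpos

end

theorem stmt13_general (f : H → EReal) (hp : IsProperFn f)
    (hc : IsConvexFn f) (hdom : domFn f = domSubdiff f) :
    IsStrictConvexFn f ↔ StrictlyMonotoneSubdiff f :=
  ⟨strictlyMonotoneSubdiff_of_isStrictConvexFn hp,
    isStrictConvexFn_of_strictlyMonotoneSubdiff hp hc hdom.subset⟩

theorem stmt13 (f : H → EReal) (hp : IsProperFn f) (hlsc : LowerSemicontinuous f)
    (hc : IsConvexFn f) (hdom : domFn f = domSubdiff f) :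
    IsStrictConvexFn f ↔ StrictlyMonotoneSubdiff f :=
  stmt13_general f hp hc hdom
end

section
/- Let H be a real Hilbert space and let f₁, f₂: H → ℝ ∪ {+∞} be proper, lsc, and convex with f₁ almost strictly convex and dom f₁ ∩ int dom f₂ ≠ ∅. Then f₁ + f₂ is almost strictly convex. -/
/-!
Let `v ∈ ∂(f₁ + f₂)(z)`, so that `a + b + ⟪v, · - z⟫ ≤ f₁ + f₂` with `a = f₁ z`, `b = f₂ z`.
For `w ∈ dom f₁ ∩ int dom f₂`, Baire category (`f₂` is lsc) and convexity bound `f₂` above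
near `w`; hence the hypograph-type set `{(y, s) | f₂ y ≤ a + b + ⟪v, y - z⟫ - s}` has nonempty
interior, which is disjoint from the epigraph of `f₁`. A separating hyperplane cannot be vertical
because `w ∈ dom f₁`, and it supports the epigraph of `f₁` at `(z, a)`, giving a subgradient of
`f₁` at `z`. Thus `dom ∂(f₁ + f₂) ⊆ dom ∂f₁`: on a segment in `dom ∂(f₁ + f₂)` the function `f₁`
is strictly convex, and adding the convex `f₂` keeps it so.
-/

open scoped InnerProductSpace

variable {H : Type*} [NormedAddCommGroup H] [InnerProductSpace ℝ H] [CompleteSpace H]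

section

variable {E : Type*} [NormedAddCommGroup E] [InnerProductSpace ℝ E] {f g : E → EReal}

theorem IsConvexFn.le_coe_combo (hf : IsConvexFn f) {x y : E} {a b t : ℝ}
    (hx : f x ≤ a) (hy : f y ≤ b) (ht₀ : 0 < t) (ht₁ : t < 1) :
    f ((1 - t) • x + t • y) ≤ ((1 - t) * a + t * b : ℝ) := by
  have ht₁' : (0 : EReal) ≤ ((1 - t : ℝ) : EReal) := by exact_mod_cast (sub_pos.2 ht₁).le
  have ht₀' : (0 : EReal) ≤ ((t : ℝ) : EReal) := by exact_mod_cast ht₀.le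
  calc f ((1 - t) • x + t • y) ≤ ((1 - t : ℝ) : EReal) * f x + ((t : ℝ) : EReal) * f y :=
        hf x y t ht₀ ht₁
    _ ≤ ((1 - t : ℝ) : EReal) * a + ((t : ℝ) : EReal) * b := by gcongr
    _ = ((1 - t) * a + t * b : ℝ) := by norm_cast

theorem IsConvexFn.convex_setOf_le (hf : IsConvexFn f) {A : E × ℝ → ℝ}
    (hA : ConcaveOn ℝ Set.univ A) : Convex ℝ {p : E × ℝ | f p.1 ≤ A p} := by
  refine convex_iff_forall_pos.2 fun p hp q hq α β hα hβ hαβ => ?_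
  obtain rfl : α = 1 - β := by linarith
  calc f ((1 - β) • p + β • q).1 = f ((1 - β) • p.1 + β • q.1) := rfl
    _ ≤ ((1 - β) * A p + β * A q : ℝ) := hf.le_coe_combo hp hq hβ (by linarith)
    _ ≤ A ((1 - β) • p + β • q) := by
        exact_mod_cast hA.2 (Set.mem_univ p) (Set.mem_univ q) hα.le hβ.le hαβ

theorem ne_top_of_mem_subdiff {z v w : E} (hv : v ∈ subdiff f z) (hw : f w ≠ ⊤) : f z ≠ ⊤ := by
  intro hz
  have := hv w
  rw [hz, EReal.top_add_of_ne_bot (EReal.coe_ne_bot _), top_le_iff] at this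
  exact hw this

theorem ne_top_and_ne_top_of_mem_subdiff_add (hf_bot : ∀ x, f x ≠ ⊥) (hg_bot : ∀ x, g x ≠ ⊥)
    {z v w : E} (hv : v ∈ subdiff (fun x => f x + g x) z) (hw : f w + g w ≠ ⊤) :
    f z ≠ ⊤ ∧ g z ≠ ⊤ :=
  (EReal.add_ne_top_iff_ne_top₂ (hf_bot z) (hg_bot z)).1
    (ne_top_of_mem_subdiff (f := fun x => f x + g x) hv hw)

theorem StrictConvexOnSet.add {s : Set E} (hf : StrictConvexOnSet f s) (hg : IsConvexFn g)
    (hfs : s ⊆ domFn f) (hgs : s ⊆ domFn g) (hf_bot : ∀ x, f x ≠ ⊥) (hg_bot : ∀ x, g x ≠ ⊥) :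
    StrictConvexOnSet (fun x => f x + g x) s := by
  intro x hx y hy hxy t ht₀ ht₁
  dsimp only
  have hfxy := hf x hx y hy hxy t ht₀ ht₁
  lift f x to ℝ using ⟨hfs hx, hf_bot x⟩ with a ha
  lift f y to ℝ using ⟨hfs hy, hf_bot y⟩ with b hb
  lift g x to ℝ using ⟨hgs hx, hg_bot x⟩ with c hc
  lift g y to ℝ using ⟨hgs hy, hg_bot y⟩ with d hd
  have hgxy := hg.le_coe_combo hc.symm.le hd.symm.le ht₀ ht₁
  calc f ((1 - t) • x + t • y) + g ((1 - t) • x + t • y)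
      < ((1 - t : ℝ) : EReal) * a + ((t : ℝ) : EReal) * b + ((1 - t) * c + t * d : ℝ) :=
        EReal.add_lt_add_of_lt_of_le hfxy hgxy (hg_bot _) (EReal.coe_ne_top _)
    _ = ((1 - t : ℝ) : EReal) * (a + c) + ((t : ℝ) : EReal) * (b + d) := by
        norm_cast; ring

theorem IsConvexFn.le_on_ball_midpoint (hf : IsConvexFn f) {x x' : E} {ρ m m' : ℝ}
    (hm : ∀ y ∈ Metric.ball x ρ, f y ≤ m) (hm' : f x' ≤ m') :
    ∀ y ∈ Metric.ball (midpoint ℝ x x') (ρ / 2), f y ≤ ((m + m') / 2 : ℝ) := by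
  intro y hy
  have hmid : midpoint ℝ x x' = (2⁻¹ : ℝ) • (x + x') := midpoint_eq_smul_add ℝ x x'
  have hq : (2 : ℝ) • y - x' ∈ Metric.ball x ρ := by
    have : (2 : ℝ) • y - x' - x = (2 : ℝ) • (y - midpoint ℝ x x') := by
      rw [hmid, smul_sub, smul_smul]; norm_num; abel
    rw [Metric.mem_ball, dist_eq_norm, this, norm_smul, Real.norm_two]
    rw [Metric.mem_ball, dist_eq_norm] at hy
    linarith
  have hy_eq : (1 - 2⁻¹ : ℝ) • ((2 : ℝ) • y - x') + (2⁻¹ : ℝ) • x' = y := by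
    rw [smul_sub, smul_smul]; norm_num
  have := hf.le_coe_combo (hm _ hq) hm' (by norm_num : (0 : ℝ) < 2⁻¹) (by norm_num)
  rw [hy_eq] at this
  exact this.trans_eq (by congr 1; ring)

end

theorem LowerSemicontinuous.exists_isOpen_subset_le {X : Type*} [TopologicalSpace X]
    [BaireSpace X] {f : X → EReal} (hf : LowerSemicontinuous f) {U : Set X} (hU : IsOpen U)
    (hne : U.Nonempty) (hfin : ∀ x ∈ U, f x ≠ ⊤) :
    ∃ V ⊆ U, IsOpen V ∧ V.Nonempty ∧ ∃ n : ℕ, ∀ x ∈ V, f x ≤ n := by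
  set D : ℕ → Set X := fun n => {x | f x ≤ n} ∪ Uᶜ
  have hD_closed (n : ℕ) : IsClosed (D n) :=
    (hf.isClosed_preimage _).union hU.isClosed_compl
  have hD_cover : ⋃ n, D n = Set.univ := by
    refine Set.eq_univ_of_forall fun x => Set.mem_iUnion.2 ?_
    by_cases hx : x ∈ U
    · obtain ⟨n, hn⟩ := exists_nat_ge (f x).toReal
      exact ⟨n, Or.inl ((EReal.le_coe_toReal (hfin x hx)).trans (by exact_mod_cast hn))⟩
    · exact ⟨0, Or.inr hx⟩
  obtain ⟨x, hxD, hxU⟩ :=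
    (dense_iUnion_interior_of_closed hD_closed hD_cover).exists_mem_open hU hne
  obtain ⟨n, hn⟩ := Set.mem_iUnion.1 hxD
  refine ⟨interior (D n) ∩ U, Set.inter_subset_right, isOpen_interior.inter hU, ⟨x, hn, hxU⟩,
    n, fun y ⟨hyD, hyU⟩ => ?_⟩
  exact (interior_subset hyD).resolve_right (not_not_intro hyU)

theorem IsConvexFn.exists_ball_le_of_mem_interior {f : H → EReal} (hf : IsConvexFn f)
    (hlsc : LowerSemicontinuous f) {w : H} (hw : w ∈ interior (domFn f)) :
    ∃ r > 0, ∃ M : ℝ, ∀ y ∈ Metric.ball w r, f y ≤ M := by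
  obtain ⟨ρ, hρ, hball⟩ := Metric.isOpen_iff.1 isOpen_interior w hw
  have hball_dom : Metric.ball w ρ ⊆ domFn f := hball.trans interior_subset
  obtain ⟨V, hVU, hV, ⟨x, hxV⟩, n, hn⟩ := hlsc.exists_isOpen_subset_le Metric.isOpen_ball
    ⟨w, Metric.mem_ball_self hρ⟩ hball_dom
  obtain ⟨δ, hδ, hδV⟩ := Metric.isOpen_iff.1 hV x hxV
  set x' : H := (2 : ℝ) • w - x
  have hx' : x' ∈ Metric.ball w ρ := by
    have : dist x' w = dist x w := by
      simp only [x', dist_eq_norm, two_smul]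
      rw [show w + w - x - w = -(x - w) by abel, norm_neg]
    rw [Metric.mem_ball, this]
    exact hVU hxV
  have hmid : midpoint ℝ x x' = w := by
    rw [midpoint_eq_smul_add, add_sub_cancel, smul_smul]; norm_num
  refine ⟨δ / 2, half_pos hδ, _, hmid ▸ hf.le_on_ball_midpoint (fun y hy => hn y (hδV hy))
    (EReal.le_coe_toReal (hball_dom hx'))⟩

theorem subdiff_nonempty_of_supports_epigraph {f : H → EReal} (L : H × ℝ →L[ℝ] ℝ) {u : ℝ}
    (hL : ∀ y (s : ℝ), f y ≤ s → u ≤ L (y, s)) {w : H} {s₀ : ℝ} (hw : f w ≠ ⊤)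
    (hLw : L (w, s₀) < u) {z : H} {a : ℝ} (hz : f z = a) (hLz : L (z, a) ≤ u) :
    (subdiff f z).Nonempty := by
  set c := L (0, 1)
  set φ := L.comp (ContinuousLinearMap.inl ℝ H ℝ)
  have hL_apply (y : H) (s : ℝ) : L (y, s) = φ y + s * c := by
    rw [show ((y, s) : H × ℝ) = (y, 0) + s • (0, 1) by simp, map_add, map_smul, smul_eq_mul]
    rfl
  -- `L` is `< u` at `(w, s₀)` but `≥ u` at `(w, s₁)` for `s₁` large, so it increases vertically
  have hc : 0 < c := by
    set s₁ := max (f w).toReal s₀ + 1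
    have hws₁ : f w ≤ s₁ := (EReal.le_coe_toReal hw).trans
      (by exact_mod_cast (le_max_left _ _).trans (lt_add_one _).le)
    have h₁ := hL w s₁ hws₁
    rw [hL_apply] at h₁ hLw
    have : s₀ < s₁ := (le_max_right _ _).trans_lt (lt_add_one _)
    nlinarith
  refine ⟨(-c⁻¹) • (InnerProductSpace.toDual ℝ H).symm φ, fun y => ?_⟩
  rw [hz, ← EReal.coe_add, real_inner_smul_left, InnerProductSpace.toDual_symm_apply, map_sub]
  by_contra! hlt
  obtain ⟨s, hys, hs⟩ := EReal.lt_iff_exists_real_btwn.1 hlt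
  have h₁ := hL y s hys.le
  rw [hL_apply] at h₁ hLz
  rw [EReal.coe_lt_coe_iff] at hs
  have : s * c < a * c - (φ y - φ z) := by
    calc s * c < (a + -c⁻¹ * (φ y - φ z)) * c := mul_lt_mul_of_pos_right hs hc
      _ = a * c - (φ y - φ z) := by field_simp; ring
  linarith

open Filter Topology in
theorem subdiff_nonempty_of_le_add {f g : H → EReal} (hf : IsConvexFn f) (hg : IsConvexFn g)
    {w : H} (hw : f w ≠ ⊤) {r M : ℝ} (hr : 0 < r) (hM : ∀ y ∈ Metric.ball w r, g y ≤ M)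
    {z v : H} {a b : ℝ} (hfz : f z = a) (hgz : g z ≤ b)
    (hle : ∀ y, ((a + b + ⟪v, y - z⟫_ℝ : ℝ) : EReal) ≤ f y + g y) :
    (subdiff f z).Nonempty := by
  set A : H × ℝ → ℝ := fun p => a + b + ⟪v, p.1 - z⟫_ℝ - p.2
  have hA : ConcaveOn ℝ Set.univ A := by
    refine ⟨convex_univ, fun p _ q _ α β _ _ hαβ => le_of_eq ?_⟩
    obtain rfl : β = 1 - α := by linarith
    have hz : (α • p + (1 - α) • q).1 - z = α • (p.1 - z) + (1 - α) • (q.1 - z) := by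
      rw [Prod.fst_add, Prod.smul_fst, Prod.smul_fst]
      module
    simp only [A, hz, inner_add_right, real_inner_smul_right, smul_eq_mul, Prod.snd_add,
      Prod.smul_snd]
    ring
  set C : Set (H × ℝ) := {p | f p.1 ≤ p.2}
  set D : Set (H × ℝ) := {p | g p.1 ≤ A p}
  have hA_cont : Continuous A := by fun_prop
  have hwD : (w, A (w, 0) - M - 1) ∈ interior D := by
    refine interior_maximal (t := {p | p.1 ∈ Metric.ball w r ∧ M < A p}) ?_ ?_ ?_
    · exact fun p hp => (hM p.1 hp.1).trans (by exact_mod_cast hp.2.le)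
    · exact (Metric.isOpen_ball.preimage continuous_fst).inter (isOpen_lt continuous_const hA_cont)
    · refine ⟨Metric.mem_ball_self hr, ?_⟩
      simp only [A]; linarith
  have hdisj : Disjoint (interior D) C := by
    rw [Set.disjoint_left]
    rintro ⟨y, s⟩ hyD (hyC : f y ≤ s)
    have : ∀ᶠ t in 𝓝[>] s, (y, t) ∈ interior D :=
      nhdsWithin_le_nhds <| (Continuous.prodMk_right y).continuousAt.preimage_mem_nhds
        (isOpen_interior.mem_nhds hyD)
    obtain ⟨t, htD, hts : s < t⟩ := (this.and self_mem_nhdsWithin).exists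
    have htD' : g y ≤ A (y, t) := interior_subset (s := D) htD
    have := (hle y).trans (add_le_add hyC htD')
    simp only [A] at this
    norm_cast at this
    linarith
  have hC : Convex ℝ C := hf.convex_setOf_le ((LinearMap.snd ℝ H ℝ).concaveOn convex_univ)
  have hD : Convex ℝ D := hg.convex_setOf_le hA
  obtain ⟨L, u, hLD, hLC⟩ := geometric_hahn_banach_open hD.interior isOpen_interior hC hdisj
  have hzD : (z, a) ∈ D := by
    show g z ≤ ((a + b + ⟪v, z - z⟫_ℝ - a : ℝ) : EReal)
    rwa [sub_self, inner_zero_right, add_zero, add_sub_cancel_left]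
  have hLz : L (z, a) ≤ u := by
    have : closure (interior D) ⊆ {p | L p ≤ u} :=
      closure_minimal (fun p hp => (hLD p hp).le) (isClosed_le L.continuous continuous_const)
    rw [hD.closure_interior_eq_closure_of_nonempty_interior ⟨_, hwD⟩] at this
    exact this (subset_closure hzD)
  exact subdiff_nonempty_of_supports_epigraph L (fun y s hys => hLC (y, s) hys) hw (hLD _ hwD) hfz hLz

theorem subdiff_nonempty_of_mem_subdiff_add {f g : H → EReal} (hf : IsConvexFn f)
    (hg : IsConvexFn g) (hf_bot : ∀ x, f x ≠ ⊥) (hg_bot : ∀ x, g x ≠ ⊥) {w : H} (hw : f w ≠ ⊤)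
    {r M : ℝ} (hr : 0 < r) (hM : ∀ y ∈ Metric.ball w r, g y ≤ M) {z v : H}
    (hv : v ∈ subdiff (fun x => f x + g x) z) : (subdiff f z).Nonempty := by
  have hgw : g w ≠ ⊤ := ne_top_of_le_ne_top (EReal.coe_ne_top M) (hM w (Metric.mem_ball_self hr))
  obtain ⟨hfz, hgz⟩ :=
    ne_top_and_ne_top_of_mem_subdiff_add hf_bot hg_bot hv (EReal.add_ne_top hw hgw)
  have hfz' := EReal.coe_toReal hfz (hf_bot z)
  have hgz' := EReal.coe_toReal hgz (hg_bot z)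
  refine subdiff_nonempty_of_le_add (v := v) hf hg hw hr hM hfz'.symm hgz'.ge fun y => ?_
  rw [EReal.coe_add, EReal.coe_add, hfz', hgz']
  exact hv y

theorem stmt15_general (f₁ f₂ : H → EReal)
    (hp₁ : IsProperFn f₁) (hc₁ : IsConvexFn f₁)
    (hp₂ : IsProperFn f₂) (hlsc₂ : LowerSemicontinuous f₂) (hc₂ : IsConvexFn f₂)
    (ha : AlmostStrictlyConvex f₁)
    (hq : (domFn f₁ ∩ interior (domFn f₂)).Nonempty) :
    AlmostStrictlyConvex (fun x => f₁ x + f₂ x) := by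
  intro x₀ x₁ hne hseg
  obtain ⟨w, hw₁, hw₂⟩ := hq
  obtain ⟨r, hr, M, hM⟩ := hc₂.exists_ball_le_of_mem_interior hlsc₂ hw₂
  have hdom (p : H) (hp : p ∈ segment ℝ x₀ x₁) : f₁ p ≠ ⊤ ∧ f₂ p ≠ ⊤ :=
    ne_top_and_ne_top_of_mem_subdiff_add hp₁.2 hp₂.2 (hseg hp).some_mem
      (EReal.add_ne_top hw₁ (interior_subset hw₂))
  have hseg₁ : segment ℝ x₀ x₁ ⊆ domSubdiff f₁ := fun p hp =>
    subdiff_nonempty_of_mem_subdiff_add hc₁ hc₂ hp₁.2 hp₂.2 hw₁ hr hM (hseg hp).some_mem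
  exact (ha x₀ x₁ hne hseg₁).add hc₂ (fun p hp => (hdom p hp).1) (fun p hp => (hdom p hp).2)
    hp₁.2 hp₂.2

theorem stmt15 (f₁ f₂ : H → EReal)
    (hp₁ : IsProperFn f₁) (hlsc₁ : LowerSemicontinuous f₁) (hc₁ : IsConvexFn f₁)
    (hp₂ : IsProperFn f₂) (hlsc₂ : LowerSemicontinuous f₂) (hc₂ : IsConvexFn f₂)
    (ha : AlmostStrictlyConvex f₁)
    (hq : (domFn f₁ ∩ interior (domFn f₂)).Nonempty) :
    AlmostStrictlyConvex (fun x => f₁ x + f₂ x) :=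
  stmt15_general f₁ f₂ hp₁ hc₁ hp₂ hlsc₂ hc₂ ha hq
end
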